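/- arXiv:1710.11328 — 6 statements merged into one kernel-verified Lean document; each statement's English description precedes it below -/
import Mathlib

section
/- For every integer n ≥ 2, the sum over k from 1 to n−1 of 1/sin²(πk/n) equals (n²−1)/3. -/
/-!
Write `S z = ∑_{j<n} j zʲ`. For an `n`-th root of unity `z ≠ 1` the telescoping identity
`(1 - z) S z = -n` inverts `1 - z`, and for `z = exp (2πik/n)` one has
`(1 - z)(1 - z⁻¹) = 4 sin² (πk/n)`; so the `k`-th term of the sum is `4 S z S z⁻¹ / n²`.
Summed over all `n`-th roots of unity, `S z S z⁻¹` gives `n ∑ j²` by Parseval's identity for the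
discrete Fourier transform; removing the term `z = 1`, which is `(∑ j)²`, leaves
`n ∑ j² - (∑ j)² = n² (n² - 1) / 12`.
-/

open Real Finset

section CommRing
variable {R : Type*} [CommRing R]

theorem sum_range_natCast_mul_two (n : ℕ) : (∑ i ∈ range n, (i : R)) * 2 = n * (n - 1) := by
  induction n with
  | zero => simp
  | succ n ih => rw [sum_range_succ, add_mul, ih]; push_cast; ring

theorem sum_range_natCast_sq_mul_six (n : ℕ) :
    (∑ i ∈ range n, (i : R) ^ 2) * 6 = n * (n - 1) * (2 * n - 1) := by
  induction n with
  | zero => simp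
  | succ n ih => rw [sum_range_succ, add_mul, ih]; push_cast; ring

theorem sub_one_mul_sum_range_natCast_mul_pow (z : R) (n : ℕ) :
    (z - 1) * ∑ j ∈ range n, (j : R) * z ^ j = (n - 1) * z ^ n - ∑ j ∈ range n, z ^ j + 1 := by
  induction n with
  | zero => simp
  | succ n ih => rw [sum_range_succ, sum_range_succ, mul_add, ih]; push_cast; ring

end CommRing

section Field
variable {K : Type*} [Field K]

theorem geom_sum_eq_zero_of_pow_eq_one {η : K} {n : ℕ} (h : η ^ n = 1) (h1 : η ≠ 1) :
    ∑ k ∈ range n, η ^ k = 0 := by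
  rw [geom_sum_eq h1, h, sub_self, zero_div]

theorem one_sub_mul_sum_range_natCast_mul_pow {z : K} {n : ℕ} (h : z ^ n = 1) (h1 : z ≠ 1) :
    (1 - z) * ∑ j ∈ range n, (j : K) * z ^ j = -n := by
  have := sub_one_mul_sum_range_natCast_mul_pow z n
  rw [h, geom_sum_eq_zero_of_pow_eq_one h h1] at this
  linear_combination -this

theorem inv_one_sub_mul_one_sub_inv {z : K} {n : ℕ} (h : z ^ n = 1) (h1 : z ≠ 1)
    (hn : (n : K) ≠ 0) :
    ((1 - z) * (1 - z⁻¹))⁻¹ =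
      (∑ j ∈ range n, (j : K) * z ^ j) * (∑ j ∈ range n, (j : K) * z⁻¹ ^ j) / n ^ 2 := by
  have hsq : (n : K) ^ 2 = (1 - z) * (1 - z⁻¹) *
      ((∑ j ∈ range n, (j : K) * z ^ j) * (∑ j ∈ range n, (j : K) * z⁻¹ ^ j)) := by
    rw [mul_mul_mul_comm, one_sub_mul_sum_range_natCast_mul_pow h h1,
      one_sub_mul_sum_range_natCast_mul_pow (by rw [inv_pow, h, inv_one]) (inv_ne_one.mpr h1)]
    ring
  rw [hsq, div_mul_cancel_right₀ (right_ne_zero_of_mul (hsq ▸ pow_ne_zero 2 hn))]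

namespace IsPrimitiveRoot

variable {ζ : K} {n : ℕ}

theorem sum_range_pow_mul_inv_pow_pow (hζ : IsPrimitiveRoot ζ n) {i j : ℕ} (hi : i < n)
    (hj : j < n) : ∑ k ∈ range n, (ζ ^ j * (ζ ^ i)⁻¹) ^ k = if i = j then (n : K) else 0 := by
  have hne : ζ ^ i ≠ 0 := pow_ne_zero _ (hζ.ne_zero (by omega))
  split_ifs with hij
  · subst hij
    simp [hne]
  · refine geom_sum_eq_zero_of_pow_eq_one ?_ fun h => hij (hζ.pow_inj hi hj ?_)
    · rw [mul_pow, inv_pow, ← pow_mul, ← pow_mul, pow_mul', pow_mul', hζ.pow_eq_one]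
      simp
    · exact ((mul_inv_eq_one₀ hne).mp h).symm

theorem parseval (hζ : IsPrimitiveRoot ζ n) (a b : ℕ → K) :
    ∑ k ∈ range n, (∑ j ∈ range n, a j * (ζ ^ k) ^ j) * (∑ i ∈ range n, b i * (ζ ^ k)⁻¹ ^ i) =
      n * ∑ j ∈ range n, a j * b j := by
  calc _ = ∑ j ∈ range n, ∑ i ∈ range n,
        a j * b i * ∑ k ∈ range n, (ζ ^ j * (ζ ^ i)⁻¹) ^ k := by
        simp_rw [sum_mul_sum, mul_sum]
        rw [sum_comm]; refine sum_congr rfl fun j _ => ?_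
        rw [sum_comm]; refine sum_congr rfl fun i _ => sum_congr rfl fun k _ => ?_
        ring
    _ = _ := by
        rw [mul_sum]
        refine sum_congr rfl fun j hj => ?_
        rw [sum_congr rfl fun i hi => by
          rw [hζ.sum_range_pow_mul_inv_pow_pow (mem_range.mp hi) (mem_range.mp hj)]]
        simp [hj, mul_comm]

theorem sum_Icc_inv_one_sub_mul_one_sub_inv [CharZero K] (hζ : IsPrimitiveRoot ζ n)
    (hn : n ≠ 0) :
    ∑ k ∈ Icc 1 (n - 1), ((1 - ζ ^ k) * (1 - (ζ ^ k)⁻¹))⁻¹ = ((n : K) ^ 2 - 1) / 12 := by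
  set T : ℕ → K := fun k =>
    (∑ j ∈ range n, (j : K) * (ζ ^ k) ^ j) * ∑ j ∈ range n, (j : K) * (ζ ^ k)⁻¹ ^ j
  have hparseval : ∑ k ∈ range n, T k = n * ∑ j ∈ range n, (j : K) ^ 2 := by
    simpa only [sq] using hζ.parseval (↑) (↑)
  have hsplit : ∑ k ∈ range n, T k = T 0 + ∑ k ∈ Icc 1 (n - 1), T k := by
    rw [← sum_insert (by simp)]
    congr 1
    ext k
    simp only [mem_range, mem_insert, mem_Icc]
    omega
  have hT0 : T 0 = (∑ j ∈ range n, (j : K)) ^ 2 := by simp [T, sq]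
  have hn' : (n : K) ≠ 0 := Nat.cast_ne_zero.mpr hn
  calc ∑ k ∈ Icc 1 (n - 1), ((1 - ζ ^ k) * (1 - (ζ ^ k)⁻¹))⁻¹
      = ∑ k ∈ Icc 1 (n - 1), T k / n ^ 2 := sum_congr rfl fun k hk => by
        rw [mem_Icc] at hk
        exact inv_one_sub_mul_one_sub_inv (by rw [pow_right_comm, hζ.pow_eq_one, one_pow])
          (hζ.pow_ne_one_of_pos_of_lt (by omega) (by omega)) hn'
    _ = (n * ∑ j ∈ range n, (j : K) ^ 2 - (∑ j ∈ range n, (j : K)) ^ 2) / n ^ 2 := by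
        rw [← sum_div, ← hparseval, hsplit, hT0, add_sub_cancel_left]
    _ = ((n : K) ^ 2 - 1) / 12 := by
        have h1 := sum_range_natCast_mul_two (R := K) n
        have h2 := sum_range_natCast_sq_mul_six (R := K) n
        field_simp
        linear_combination (2 * n) * h2 - 3 * (2 * ∑ j ∈ range n, (j : K) + n * (n - 1)) * h1

end IsPrimitiveRoot
end Field

open Complex in
theorem Complex.one_sub_exp_mul_one_sub_inv_eq_four_mul_sin_sq (x : ℂ) :
    (1 - exp (2 * x * I)) * (1 - (exp (2 * x * I))⁻¹) = 4 * sin x ^ 2 := by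
  have hsq : exp (2 * x * I) = exp (x * I) ^ 2 := by rw [← exp_nat_mul]; ring_nf
  have hz : exp (x * I) * (exp (x * I))⁻¹ = 1 := mul_inv_cancel₀ (exp_ne_zero _)
  have hsin : 2 * I * sin x = exp (x * I) - (exp (x * I))⁻¹ := by
    rw [sin, neg_mul, exp_neg]; linear_combination ((exp (x * I))⁻¹ - exp (x * I)) * I_sq
  rw [hsq, ← inv_pow]
  linear_combination (exp (x * I) * (exp (x * I))⁻¹ - 1) * hz +
    (exp (x * I) - (exp (x * I))⁻¹ + 2 * I * sin x) * hsin - 4 * sin x ^ 2 * I_sq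

theorem sum_inv_sin_sq (n : ℕ) (hn : 2 ≤ n) :
    ∑ k ∈ Finset.Icc 1 (n - 1), (1 : ℝ) / (Real.sin (π * k / n)) ^ 2
      = ((n : ℝ) ^ 2 - 1) / 3 := by
  have hn0 : n ≠ 0 := by omega
  have hζ := Complex.isPrimitiveRoot_exp n hn0
  have hfactor (k : ℕ) : (1 - Complex.exp (2 * π * Complex.I / n) ^ k) *
      (1 - (Complex.exp (2 * π * Complex.I / n) ^ k)⁻¹) = 4 * Complex.sin (π * k / n) ^ 2 := by
    rw [← Complex.exp_nat_mul, ← Complex.one_sub_exp_mul_one_sub_inv_eq_four_mul_sin_sq]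
    ring_nf
  apply Complex.ofReal_injective
  push_cast
  calc ∑ k ∈ Icc 1 (n - 1), 1 / Complex.sin (π * k / n) ^ 2
      = 4 * ∑ k ∈ Icc 1 (n - 1),
          ((1 - Complex.exp (2 * π * Complex.I / n) ^ k) *
            (1 - (Complex.exp (2 * π * Complex.I / n) ^ k)⁻¹))⁻¹ := by
        simp_rw [mul_sum, hfactor, mul_inv, ← mul_assoc]
        simp
    _ = ((n : ℂ) ^ 2 - 1) / 3 := by
        rw [hζ.sum_Icc_inv_one_sub_mul_one_sub_inv hn0]
        ring
end

section
/- For every integer n ≥ 2, the sum over k from 1 to n−1 of 1/sin⁴(πk/n) equals (n²−1)(n²+11)/45. -/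
/-!
Put `ζ = exp (2πi/n)` and `a k = (1 - ζ ^ k)⁻¹`. Since `(1 - exp (2iθ))² = -4 exp (2iθ) sin² θ`,
`1 / sin² (πk/n) = 4 (a k - a k ²)`. Substituting `X ↦ X + 1` in
`∏_{k=1}^{n-1} (X - ζ ^ k) = 1 + X + ⋯ + X ^ (n-1)` gives `n ∏ (1 + a k X) = ∑_{j<n} (X + 1) ^ j`,
so the `r`-th elementary symmetric function of the `a k` is `C(n, r+1) / n`. Newton's identities
then give the power sums `∑ a k ^ m` for `m ≤ 4`, and `∑ 16 (a k - a k ²)²` is a polynomial in `n`.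
-/

open Finset Polynomial

namespace Finset
variable {ι R : Type*} [CommRing R] (s : Finset ι) (f : ι → R)

theorem sum_pow_eq_esymm_sub_sum (k : ℕ) (hk : 0 < k) :
    ∑ i ∈ s, f i ^ k = (-1) ^ (k + 1) * k * (s.val.map f).esymm k -
      ∑ a ∈ antidiagonal k with a.1 ∈ Set.Ioo 0 k,
        (-1) ^ a.1 * (s.val.map f).esymm a.1 * ∑ i ∈ s, f i ^ a.2 := by
  have hsum (j : ℕ) : ∑ i : s, f i ^ j = ∑ i ∈ s, f i ^ j := sum_coe_sort s (f · ^ j)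
  have hval : (univ.val.map fun i : s ↦ f i) = s.val.map f := Multiset.attach_map_val' _ _
  simpa only [map_sub, map_mul, map_pow, map_neg, map_one, map_natCast, map_sum,
    MvPolynomial.aeval_esymm_eq_multiset_esymm, MvPolynomial.psum, MvPolynomial.aeval_X, hval,
    hsum] using congrArg (MvPolynomial.aeval fun i : s ↦ f i)
      (MvPolynomial.psum_eq_mul_esymm_sub_sum s R k hk)

theorem sum_eq_esymm_one : ∑ i ∈ s, f i = (s.val.map f).esymm 1 := by
  simpa [sum_filter, Nat.antidiagonal_succ] using sum_pow_eq_esymm_sub_sum s f 1 one_pos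

theorem sum_sq_eq_esymm :
    ∑ i ∈ s, f i ^ 2 = (s.val.map f).esymm 1 ^ 2 - 2 * (s.val.map f).esymm 2 := by
  rw [sum_pow_eq_esymm_sub_sum s f 2 two_pos,
    show {a ∈ antidiagonal 2 | a.1 ∈ Set.Ioo 0 2} = {(1, 1)} from rfl, sum_singleton]
  simp only [pow_one]
  rw [sum_eq_esymm_one s f]
  ring

theorem sum_pow_three_eq_esymm :
    ∑ i ∈ s, f i ^ 3 = (s.val.map f).esymm 1 ^ 3 -
      3 * (s.val.map f).esymm 1 * (s.val.map f).esymm 2 + 3 * (s.val.map f).esymm 3 := by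
  rw [sum_pow_eq_esymm_sub_sum s f 3 three_pos,
    show {a ∈ antidiagonal 3 | a.1 ∈ Set.Ioo 0 3} = {(1, 2), (2, 1)} from rfl,
    sum_pair (by decide)]
  simp only [pow_one]
  rw [sum_eq_esymm_one s f, sum_sq_eq_esymm s f]
  ring

theorem sum_pow_four_eq_esymm :
    ∑ i ∈ s, f i ^ 4 = (s.val.map f).esymm 1 ^ 4 -
      4 * (s.val.map f).esymm 1 ^ 2 * (s.val.map f).esymm 2 + 2 * (s.val.map f).esymm 2 ^ 2 +
      4 * (s.val.map f).esymm 1 * (s.val.map f).esymm 3 - 4 * (s.val.map f).esymm 4 := by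
  rw [sum_pow_eq_esymm_sub_sum s f 4 four_pos,
    show {a ∈ antidiagonal 4 | a.1 ∈ Set.Ioo 0 4} = {(1, 3), (2, 2), (3, 1)} from rfl,
    sum_insert (by decide), sum_pair (by decide)]
  simp only [pow_one]
  rw [sum_eq_esymm_one s f, sum_sq_eq_esymm s f, sum_pow_three_eq_esymm s f]
  ring

end Finset

theorem Finset.coeff_prod_one_add_C_mul_X {ι R : Type*} [CommSemiring R] (s : Finset ι)
    (f : ι → R) (r : ℕ) : (∏ i ∈ s, (1 + C (f i) * X)).coeff r = (s.val.map f).esymm r := by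
  simp_rw [prod_one_add, prod_mul_distrib, prod_const, ← map_prod, finsetSum_coeff,
    coeff_C_mul_X_pow, Finset.esymm_map_val, powersetCard_eq_filter, sum_filter, eq_comm]

theorem Nat.sum_range_choose_eq_choose_succ (n r : ℕ) :
    ∑ j ∈ range n, j.choose r = n.choose (r + 1) := by
  induction n with
  | zero => simp
  | succ n ih => rw [sum_range_succ, ih, Nat.choose_succ_succ', add_comm]

namespace IsPrimitiveRoot

section CommRing
variable {R : Type*} [CommRing R] {ζ : R} {n : ℕ}

theorem pow_ne_one_of_mem_Icc (hζ : IsPrimitiveRoot ζ n) {k : ℕ} (hk : k ∈ Icc 1 (n - 1)) :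
    ζ ^ k ≠ 1 := by
  rw [mem_Icc] at hk
  exact hζ.pow_ne_one_of_pos_of_lt (by omega) (by omega)

variable [IsDomain R]

theorem prod_Icc_X_sub_C_pow (hζ : IsPrimitiveRoot ζ n) (hn : 0 < n) :
    ∏ k ∈ Icc 1 (n - 1), (X - C (ζ ^ k)) = ∑ j ∈ range n, X ^ j := by
  refine mul_right_cancel₀ (b := X - 1) (X_sub_C_ne_zero 1) ?_
  have hrange : range n = insert 0 (Icc 1 (n - 1)) := by
    ext k; simp only [mem_range, mem_insert, mem_Icc]; omega
  have hroots := X_pow_sub_C_eq_prod hζ hn (one_pow n)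
  rw [C_1] at hroots
  rw [geom_sum_mul, hroots, hrange, prod_insert (by simp), mul_comm]
  simp

theorem prod_Icc_one_sub_pow (hζ : IsPrimitiveRoot ζ n) (hn : 0 < n) :
    ∏ k ∈ Icc 1 (n - 1), (1 - ζ ^ k) = n := by
  simpa [eval_prod] using congrArg (eval 1) (hζ.prod_Icc_X_sub_C_pow hn)

end CommRing

variable {K : Type*} [Field K] {ζ : K} {n : ℕ}

theorem natCast_mul_prod_one_add_C_inv_one_sub_pow_mul_X (hζ : IsPrimitiveRoot ζ n) (hn : 0 < n) :
    C (n : K) * ∏ k ∈ Icc 1 (n - 1), (1 + C (1 - ζ ^ k)⁻¹ * X) = ∑ j ∈ range n, (X + 1) ^ j := by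
  have hfactor : ∀ k ∈ Icc 1 (n - 1),
      C (1 - ζ ^ k) * (1 + C (1 - ζ ^ k)⁻¹ * X) = (X + 1) - C (ζ ^ k) := by
    intro k hk
    rw [mul_add, ← mul_assoc, ← C_mul,
      mul_inv_cancel₀ (sub_ne_zero.2 (hζ.pow_ne_one_of_mem_Icc hk).symm), C_1, C_sub, C_1]
    ring
  rw [← hζ.prod_Icc_one_sub_pow hn, map_prod, ← prod_mul_distrib, prod_congr rfl hfactor]
  have hshift := congrArg (·.comp (X + 1)) (hζ.prod_Icc_X_sub_C_pow hn)
  simp only [Polynomial.prod_comp, Polynomial.sum_comp] at hshift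
  simpa using hshift

theorem esymm_inv_one_sub_pow (hζ : IsPrimitiveRoot ζ n) (hn : (n : K) ≠ 0) (r : ℕ) :
    ((Icc 1 (n - 1)).val.map fun k ↦ (1 - ζ ^ k)⁻¹).esymm r = n.choose (r + 1) / n := by
  have hn' : 0 < n := Nat.pos_of_ne_zero (by rintro rfl; simp at hn)
  rw [eq_div_iff hn, mul_comm, ← coeff_prod_one_add_C_mul_X, ← coeff_C_mul,
    hζ.natCast_mul_prod_one_add_C_inv_one_sub_pow_mul_X hn', finsetSum_coeff]
  simp_rw [coeff_X_add_one_pow]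
  rw [← Nat.sum_range_choose_eq_choose_succ, Nat.cast_sum]

theorem sum_inv_one_sub_pow_sub_sq_sq [CharZero K] (hζ : IsPrimitiveRoot ζ n) (hn : 0 < n) :
    ∑ k ∈ Icc 1 (n - 1), ((1 - ζ ^ k)⁻¹ - (1 - ζ ^ k)⁻¹ ^ 2) ^ 2
      = ((n : K) ^ 2 - 1) * ((n : K) ^ 2 + 11) / 720 := by
  have hn' : (n : K) ≠ 0 := Nat.cast_ne_zero.2 hn.ne'
  have hexpand : ∀ a : K, (a - a ^ 2) ^ 2 = a ^ 2 - 2 * a ^ 3 + a ^ 4 := fun a ↦ by ring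
  simp only [hexpand, sum_add_distrib, sum_sub_distrib, ← mul_sum]
  rw [sum_sq_eq_esymm, sum_pow_three_eq_esymm, sum_pow_four_eq_esymm]
  simp only [hζ.esymm_inv_one_sub_pow hn', Nat.cast_choose_eq_descPochhammer_div,
    descPochhammer_succ_right, descPochhammer_zero, eval_mul, eval_sub, eval_X, eval_natCast,
    eval_one, Nat.factorial]
  field_simp
  ring

end IsPrimitiveRoot

theorem Complex.one_sub_exp_two_mul_I_sq (z : ℂ) :
    (1 - exp (2 * z * I)) ^ 2 = -4 * exp (2 * z * I) * sin z ^ 2 := by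
  rw [Complex.sin, neg_mul z, exp_neg, show 2 * z * I = z * I + z * I by ring, exp_add]
  field_simp
  linear_combination 4 * (exp (z * I) ^ 2 - 1) ^ 2 * I_sq

theorem Complex.inv_sin_sq_eq (z : ℂ) (hz : exp (2 * z * I) ≠ 1) :
    (sin z ^ 2)⁻¹ = 4 * ((1 - exp (2 * z * I))⁻¹ - (1 - exp (2 * z * I))⁻¹ ^ 2) := by
  have h1c : 1 - exp (2 * z * I) ≠ 0 := sub_ne_zero.2 hz.symm
  have hsin : sin z ^ 2 = -(1 - exp (2 * z * I)) ^ 2 / (4 * exp (2 * z * I)) := by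
    rw [one_sub_exp_two_mul_I_sq]; field_simp
  rw [hsin]
  field_simp
  ring

open Real

theorem sum_inv_sin_pow_four (n : ℕ) (hn : 2 ≤ n) :
    ∑ k ∈ Finset.Icc 1 (n - 1), (1 : ℝ) / (Real.sin (π * k / n)) ^ 4
      = ((n : ℝ) ^ 2 - 1) * ((n : ℝ) ^ 2 + 11) / 45 := by
  have hn0 : 0 < n := by omega
  set ζ := Complex.exp (2 * π * Complex.I / n)
  have hζ : IsPrimitiveRoot ζ n := Complex.isPrimitiveRoot_exp n hn0.ne'
  have hterm : ∀ k ∈ Icc 1 (n - 1), ((1 / Real.sin (π * k / n) ^ 4 : ℝ) : ℂ)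
      = 16 * ((1 - ζ ^ k)⁻¹ - (1 - ζ ^ k)⁻¹ ^ 2) ^ 2 := by
    intro k hk
    have hpow : ζ ^ k = Complex.exp (2 * (π * k / n : ℂ) * Complex.I) := by
      rw [← Complex.exp_nat_mul]; ring_nf
    have hsin := Complex.inv_sin_sq_eq (π * k / n) (hpow ▸ hζ.pow_ne_one_of_mem_Icc hk)
    rw [← hpow] at hsin
    push_cast
    rw [one_div, show (4 : ℕ) = 2 * 2 from rfl, pow_mul, ← inv_pow, hsin]
    ring
  apply Complex.ofReal_injective
  rw [Complex.ofReal_sum, sum_congr rfl hterm, ← mul_sum, hζ.sum_inv_one_sub_pow_sub_sq_sq hn0]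
  push_cast
  ring
end

section
/- For every integer n ≥ 2 and integer m with 1 ≤ m ≤ n−1, the sum over k from 1 to n−1 of sin²(mπk/n)/sin²(πk/n) equals m(n−m). -/
/-!
Write `S m` for the sum. Since `sin² a - sin² b = sin (a + b) sin (a - b)`, the increment
`S (m + 1) - S m` is the sum over `θ = πk/n` of the Dirichlet kernel
`sin ((2m + 1) θ) / sin θ = 1 + 2 ∑_{j ≤ m} cos (2jθ)`. For `n ∤ j` the cosines `cos (2πjk/n)`,
`1 ≤ k < n`, sum to `-1`: this is the same kernel identity at `m = n - 1`, where
`sin ((2n - 1) πj/n) = -sin (πj/n)`. Hence `S (m + 1) - S m = n - 1 - 2m` and `S m = m (n - m)`.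
-/

open Real Finset

theorem Real.sin_sq_sub_sin_sq (x y : ℝ) : sin x ^ 2 - sin y ^ 2 = sin (x + y) * sin (x - y) := by
  rw [sin_add, sin_sub]
  linear_combination sin y ^ 2 * sin_sq_add_cos_sq x - sin x ^ 2 * sin_sq_add_cos_sq y

theorem Real.sin_two_mul_add_one_mul (x : ℝ) (m : ℕ) :
    sin ((2 * m + 1) * x) = sin x * (1 + 2 * ∑ j ∈ Icc 1 m, cos (2 * j * x)) := by
  induction m with
  | zero => simp
  | succ m ih =>
    have step : 2 * sin x * cos (2 * (m + 1 : ℕ) * x)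
        = sin ((2 * (m + 1 : ℕ) + 1) * x) - sin ((2 * m + 1) * x) := by
      rw [two_mul_sin_mul_cos, ← neg_neg (x - _), sin_neg]
      push_cast
      ring_nf
    rw [sum_Icc_succ_top (by omega)]
    linear_combination ih - step

theorem Real.sin_sq_succ_mul_div_sub (x : ℝ) (hx : sin x ≠ 0) (m : ℕ) :
    sin ((m + 1) * x) ^ 2 / sin x ^ 2 - sin (m * x) ^ 2 / sin x ^ 2
      = 1 + 2 * ∑ j ∈ Icc 1 m, cos (2 * j * x) := by
  rw [← sub_div, sin_sq_sub_sin_sq, show (m + 1) * x + m * x = (2 * m + 1) * x by ring,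
    show (m + 1) * x - m * x = x by ring, div_eq_iff (pow_ne_zero 2 hx), sin_two_mul_add_one_mul]
  ring

theorem sin_pi_mul_div_ne_zero {n : ℕ} (hn : n ≠ 0) {j : ℤ} (hj : ¬ (n : ℤ) ∣ j) :
    sin (π * j / n) ≠ 0 := by
  rw [Ne, sin_eq_zero_iff]
  rintro ⟨k, hk⟩
  field_simp at hk
  exact hj ⟨k, by exact_mod_cast hk.symm.trans (mul_comm _ _)⟩

theorem sum_cos_two_pi_mul_div {n : ℕ} (hn : n ≠ 0) {j : ℤ} (hj : ¬ (n : ℤ) ∣ j) :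
    ∑ k ∈ Icc 1 (n - 1), cos (2 * π * j * k / n) = -1 := by
  have hsin := sin_pi_mul_div_ne_zero hn hj
  have hwrap : sin ((2 * (n - 1 : ℕ) + 1) * (π * j / n)) = -sin (π * j / n) := by
    have harg : (2 * (n - 1 : ℕ) + 1) * (π * j / n) = -(π * j / n) + j * (2 * π) := by
      push_cast [Nat.cast_sub (Nat.one_le_iff_ne_zero.mpr hn)]
      field_simp
      ring
    rw [harg, sin_add_int_mul_two_pi, sin_neg]
  rw [sin_two_mul_add_one_mul, ← mul_neg_one] at hwrap
  have hsum := mul_left_cancel₀ hsin hwrap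
  calc _ = ∑ k ∈ Icc 1 (n - 1), cos (2 * k * (π * j / n)) :=
        sum_congr rfl fun k _ => by congr 1; ring
    _ = -1 := by linarith

theorem sin_pi_mul_div_ne_zero_of_lt {n k : ℕ} (hk : 0 < k) (hkn : k < n) :
    sin (π * k / n) ≠ 0 := by
  exact_mod_cast sin_pi_mul_div_ne_zero (j := k) (by omega)
    (Int.natCast_dvd_natCast.not.mpr (Nat.not_dvd_of_pos_of_lt hk hkn))

theorem sum_sin_sq_div_sin_sq_succ_sub {n m : ℕ} (hmn : m + 1 < n) :
    ∑ k ∈ Icc 1 (n - 1), sin (((m : ℝ) + 1) * π * k / n) ^ 2 / sin (π * k / n) ^ 2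
      - ∑ k ∈ Icc 1 (n - 1), sin ((m : ℝ) * π * k / n) ^ 2 / sin (π * k / n) ^ 2
      = n - 1 - 2 * m := by
  rw [← sum_sub_distrib]
  calc _ = ∑ k ∈ Icc 1 (n - 1), (1 + 2 * ∑ j ∈ Icc 1 m, cos (2 * π * j * k / n)) := by
        refine sum_congr rfl fun k hk => ?_
        rw [mem_Icc] at hk
        rw [show ((m : ℝ) + 1) * π * k / n = (m + 1) * (π * k / n) by ring,
          show (m : ℝ) * π * k / n = m * (π * k / n) by ring,
          sin_sq_succ_mul_div_sub _ (sin_pi_mul_div_ne_zero_of_lt (by omega) (by omega))]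
        congr 2
        exact sum_congr rfl fun j _ => by congr 1; ring
    _ = (n - 1 : ℕ) + 2 * ∑ j ∈ Icc 1 m, ∑ k ∈ Icc 1 (n - 1), cos (2 * π * j * k / n) := by
        rw [sum_add_distrib, ← mul_sum, sum_comm]
        simp
    _ = (n - 1 : ℕ) + 2 * ∑ j ∈ Icc 1 m, (-1 : ℝ) := by
        congr 2
        refine sum_congr rfl fun j hj => ?_
        rw [mem_Icc] at hj
        exact_mod_cast sum_cos_two_pi_mul_div (n := n) (j := j) (by omega)
          (Int.natCast_dvd_natCast.not.mpr (Nat.not_dvd_of_pos_of_lt (by omega) (by omega)))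
    _ = n - 1 - 2 * m := by
        simp [Nat.cast_sub (by omega : 1 ≤ n)]
        ring

theorem sum_sin_sq_div_sin_sq_general (n m : ℕ) (hm' : m ≤ n - 1) :
    ∑ k ∈ Finset.Icc 1 (n - 1),
        (Real.sin ((m : ℝ) * π * k / n)) ^ 2 / (Real.sin (π * k / n)) ^ 2
      = (m : ℝ) * ((n : ℝ) - m) := by
  induction m with
  | zero => simp
  | succ m ih =>
    have hstep := sum_sin_sq_div_sin_sq_succ_sub (n := n) (m := m) (by omega)
    push_cast
    linear_combination ih (by omega) + hstep

theorem sum_sin_sq_div_sin_sq (n m : ℕ) (hn : 2 ≤ n) (hm : 1 ≤ m) (hm' : m ≤ n - 1) :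
    ∑ k ∈ Finset.Icc 1 (n - 1),
        (Real.sin ((m : ℝ) * π * k / n)) ^ 2 / (Real.sin (π * k / n)) ^ 2
      = (m : ℝ) * ((n : ℝ) - m) :=
  sum_sin_sq_div_sin_sq_general n m hm'
end

section
/- Let n ≥ 2 and let A be the n×n real symmetric circulant matrix with off-diagonal entries A_{ij} = −3/(n⁴ sin⁴(π(i−j)/n)) + 2/(n⁴ sin²(π(i−j)/n)) for i ≠ j, and diagonal entries A_{ii} = (n²−1)(n²+11)/(15n⁴) − (2n²−2)/(3n⁴). Then for each k with 0 ≤ k ≤ n−1, the vector v_k with components (v_k)_j = e^{2πijk/n} is an eigenvector of A with eigenvalue λ_k = 2k²(n−k)²/n⁴. -/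
/-!
Every circulant matrix is diagonalised by the vectors `v_k`, and its eigenvalue sequence `λ`
determines it through the inverse discrete Fourier transform:
`A i j = n⁻¹ ∑ₘ λₘ ξ^m` with `ξ = e^{2πi(i-j)/n}`. So it suffices to check this identity for
`λₘ = 2m²(n-m)²/n⁴`. On the diagonal (`ξ = 1`) it is `30 ∑ₘ m²(n-m)² = n(n⁴-1)`.
Off the diagonal `ξ ≠ 1` is an `n`-th root of unity; summing by parts five times against the weights
`ξ^m` kills the quartic `m²(n-m)²` and gives `(ξ-1)⁴ ∑ₘ m²(n-m)² ξ^m = -4nξ(ξ²+4ξ+1)`, while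
`4ξ sin²(π(i-j)/n) = -(ξ-1)²` turns the prescribed entry into the same rational function of `ξ`.
-/

open Finset

section SummationByParts

open scoped fwdDiff

variable {R : Type*} [CommRing R]

theorem sub_one_mul_sum_mul_pow (ζ : R) (f : ℤ → R) (N : ℕ) :
    (ζ - 1) * ∑ m ∈ range N, f m * ζ ^ m
      = ∑ m ∈ range N, Δ_[-1] f m * ζ ^ m + (f (N - 1) * ζ ^ N - f (-1)) := by
  induction N with
  | zero => simp
  | succ N ih =>
    have hΔ : Δ_[-1] f N = f (N - 1) - f N := by rw [fwdDiff, ← sub_eq_add_neg]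
    rw [sum_range_succ, sum_range_succ, mul_add, ih, hΔ, Nat.cast_succ, add_sub_cancel_right]
    ring

theorem sub_one_pow_mul_sum_mul_pow (ζ : R) (f : ℤ → R) (N d : ℕ) :
    (ζ - 1) ^ d * ∑ m ∈ range N, f m * ζ ^ m
      = ∑ m ∈ range N, (Δ_[-1])^[d] f m * ζ ^ m
        + ∑ k ∈ range d, (ζ - 1) ^ k
            * ((Δ_[-1])^[d - 1 - k] f (N - 1) * ζ ^ N - (Δ_[-1])^[d - 1 - k] f (-1)) := by
  induction d with
  | zero => simp
  | succ d ih =>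
    rw [pow_succ', mul_assoc, ih, mul_add, sub_one_mul_sum_mul_pow, mul_sum, sum_range_succ',
      Function.iterate_succ_apply']
    simp only [pow_succ', mul_assoc, Nat.add_sub_cancel, Nat.sub_zero, pow_zero, one_mul,
      Nat.sub_sub, Nat.add_comm 1]
    ring

theorem sub_one_pow_five_mul_sum_sq_mul_sub_sq_mul_pow {n : ℕ} {ζ : R} (hζ : ζ ^ n = 1) :
    (ζ - 1) ^ 5 * ∑ m ∈ range n, (m : R) ^ 2 * (n - m) ^ 2 * ζ ^ m
      = -4 * n * ζ * (ζ - 1) * (ζ ^ 2 + 4 * ζ + 1) := by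
  set f : ℤ → R := fun x => (x : R) ^ 2 * (n - x) ^ 2
  have hf : (Δ_[-1])^[5] f = 0 := by
    funext x
    simp only [Function.iterate_succ_apply', Function.iterate_zero_apply, fwdDiff, Pi.zero_apply, f]
    push_cast
    ring
  have h := sub_one_pow_mul_sum_mul_pow ζ f n 5
  simp only [f, Int.cast_natCast, hζ] at h
  rw [h, hf]
  simp [sum_range_succ, Function.iterate_succ_apply', fwdDiff]
  ring

end SummationByParts

theorem thirty_mul_sum_sq_mul_sub_sq {R : Type*} [CommRing R] (x : R) (N : ℕ) :
    30 * ∑ m ∈ range N, (m : R) ^ 2 * (x - m) ^ 2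
      = 5 * x ^ 2 * N * (N - 1) * (2 * N - 1) - 15 * x * N ^ 2 * (N - 1) ^ 2
        + N * (N - 1) * (2 * N - 1) * (3 * N ^ 2 - 3 * N - 1) := by
  induction N with
  | zero => simp
  | succ N ih => rw [sum_range_succ, mul_add, ih]; push_cast; ring

theorem Int.natCast_dvd_sub_iff_eq_of_lt {a b n : ℕ} (ha : a < n) (hb : b < n) :
    (n : ℤ) ∣ (a : ℤ) - b ↔ a = b := by
  refine ⟨fun h => ?_, fun h => by simp [h]⟩
  have := Int.eq_zero_of_dvd_of_natAbs_lt_natAbs h (by omega)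
  omega

theorem IsPrimitiveRoot.sum_zpow_mul_eq_ite {K : Type*} [Field K] {ω : K} {n : ℕ}
    (hω : IsPrimitiveRoot ω n) (a : ℤ) :
    ∑ j ∈ range n, ω ^ (a * j) = if (n : ℤ) ∣ a then (n : K) else 0 := by
  simp only [zpow_mul, zpow_natCast]
  split_ifs with ha
  · simp [(hω.zpow_eq_one_iff_dvd a).mpr ha]
  · have hn : (ω ^ a) ^ n = 1 := by
      rw [← zpow_natCast, zpow_comm, zpow_natCast, hω.pow_eq_one, one_zpow]
    rw [geom_sum_eq (mt (hω.zpow_eq_one_iff_dvd a).mp ha), hn, sub_self, zero_div]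

namespace Matrix

theorem mulVec_zpow_eq_smul_of_eq_inv_dft {K : Type*} [Field K] {n : ℕ} {ω : K}
    (hω : IsPrimitiveRoot ω n) (c : ℕ → K) (B : Matrix (Fin n) (Fin n) K)
    (hB : ∀ i j : Fin n, B i j = (n : K)⁻¹ * ∑ m ∈ range n, c m * ω ^ (((i : ℤ) - j) * m))
    (k : Fin n) :
    B *ᵥ (fun j : Fin n => ω ^ ((j : ℤ) * k)) = c k • fun j : Fin n => ω ^ ((j : ℤ) * k) := by
  have hn : NeZero n := ⟨k.pos.ne'⟩
  have hω0 : ω ≠ 0 := hω.ne_zero hn.out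
  have hn0 : (n : K) ≠ 0 := hω.neZero'.out
  funext i
  have horth : ∀ m ∈ range n, ∑ j : Fin n, ω ^ (((i : ℤ) - j) * m) * ω ^ ((j : ℤ) * k)
      = if m = k then n * ω ^ ((i : ℤ) * k) else 0 := by
    intro m hm
    have hdvd : (n : ℤ) ∣ (k : ℤ) - m ↔ m = k :=
      (Int.natCast_dvd_sub_iff_eq_of_lt k.isLt (mem_range.mp hm)).trans eq_comm
    calc ∑ j : Fin n, ω ^ (((i : ℤ) - j) * m) * ω ^ ((j : ℤ) * k)
        = ω ^ ((i : ℤ) * m) * ∑ j ∈ range n, ω ^ (((k : ℤ) - m) * j) := by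
          rw [Fin.sum_univ_eq_sum_range (fun j => ω ^ (((i : ℤ) - j) * m) * ω ^ ((j : ℤ) * k)),
            mul_sum]
          refine sum_congr rfl fun j _ => ?_
          rw [← zpow_add₀ hω0, ← zpow_add₀ hω0]
          ring_nf
      _ = _ := by
          simp only [hω.sum_zpow_mul_eq_ite, hdvd]
          split_ifs with h <;> simp [h, mul_comm]
  simp only [mulVec, dotProduct, hB, Pi.smul_apply, smul_eq_mul, mul_assoc, sum_mul]
  rw [← mul_sum, sum_comm, sum_congr rfl fun m hm => by rw [← mul_sum, horth m hm]]
  simp only [mul_ite, mul_zero, sum_ite_eq', mem_range, k.isLt, if_true]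
  field_simp

end Matrix

section

open Real Complex

namespace Complex

theorem four_mul_exp_mul_sin_sq (z : ℂ) :
    4 * exp (2 * z * I) * sin z ^ 2 = -(exp (2 * z * I) - 1) ^ 2 := by
  have hw : exp (z * I) ≠ 0 := exp_ne_zero _
  have h2 : exp (2 * z * I) = exp (z * I) ^ 2 := by rw [← exp_nat_mul]; push_cast; ring_nf
  have hneg : exp (-z * I) = (exp (z * I))⁻¹ := by rw [← exp_neg]; ring_nf
  rw [sin, hneg, h2]
  field_simp
  linear_combination 4 * (1 - exp (z * I) ^ 2) ^ 2 * I_sq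

theorem neg_three_div_sin_pow_four_add_two_div_sin_sq {z ζ : ℂ} (hζ : exp (2 * z * I) = ζ)
    (hζ1 : ζ ≠ 1) :
    -3 / sin z ^ 4 + 2 / sin z ^ 2 = -8 * ζ * (ζ ^ 2 + 4 * ζ + 1) / (ζ - 1) ^ 4 := by
  have hsin := four_mul_exp_mul_sin_sq z
  rw [hζ] at hsin
  have hζ0 : ζ ≠ 0 := hζ ▸ exp_ne_zero _
  have hζ1' : ζ - 1 ≠ 0 := sub_ne_zero.mpr hζ1
  have hs2 : sin z ^ 2 = -(ζ - 1) ^ 2 / (4 * ζ) := by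
    field_simp
    linear_combination hsin
  rw [show sin z ^ 4 = (sin z ^ 2) ^ 2 by ring, hs2]
  field_simp
  ring

end Complex

noncomputable def circulantEigenvalue (n k : ℕ) : ℝ :=
  2 * (k : ℝ) ^ 2 * ((n : ℝ) - k) ^ 2 / (n : ℝ) ^ 4

theorem inv_mul_sum_circulantEigenvalue {n : ℕ} (hn : n ≠ 0) :
    (n : ℝ)⁻¹ * ∑ m ∈ range n, circulantEigenvalue n m
      = ((n : ℝ) ^ 2 - 1) * ((n : ℝ) ^ 2 + 11) / (15 * (n : ℝ) ^ 4)
        - (2 * (n : ℝ) ^ 2 - 2) / (3 * (n : ℝ) ^ 4) := by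
  have hsum := thirty_mul_sum_sq_mul_sub_sq (n : ℝ) n
  simp only [circulantEigenvalue, ← sum_div, mul_assoc, ← mul_sum]
  field_simp
  linear_combination 3 * hsum

theorem inv_mul_sum_circulantEigenvalue_mul_zpow {n : ℕ} (hn : n ≠ 0) {d : ℤ}
    (hd : ¬(n : ℤ) ∣ d) :
    (n : ℂ)⁻¹ * ∑ m ∈ range n, (circulantEigenvalue n m : ℂ) * exp (2 * π * I / n) ^ (d * m)
      = ((-3 / ((n : ℝ) ^ 4 * Real.sin (π * d / n) ^ 4)
          + 2 / ((n : ℝ) ^ 4 * Real.sin (π * d / n) ^ 2) : ℝ) : ℂ) := by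
  have hω := Complex.isPrimitiveRoot_exp n hn
  set ζ := exp (2 * π * I / n) ^ d with hζdef
  have hζn : ζ ^ n = 1 := by
    rw [← zpow_natCast, zpow_comm, zpow_natCast, hω.pow_eq_one, one_zpow]
  have hζ1 : ζ ≠ 1 := mt (hω.zpow_eq_one_iff_dvd d).mp hd
  have hζ : exp (2 * (π * d / n) * I) = ζ := by
    rw [hζdef, ← Complex.exp_int_mul]
    ring_nf
  have hn0 : (n : ℂ) ≠ 0 := Nat.cast_ne_zero.mpr hn
  have hζ1' : ζ - 1 ≠ 0 := sub_ne_zero.mpr hζ1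
  have hS : ∑ m ∈ range n, (m : ℂ) ^ 2 * (n - m) ^ 2 * ζ ^ m
      = -4 * n * ζ * (ζ ^ 2 + 4 * ζ + 1) / (ζ - 1) ^ 4 := by
    have hsum := sub_one_pow_five_mul_sum_sq_mul_sub_sq_mul_pow hζn
    field_simp
    apply mul_left_cancel₀ hζ1'
    linear_combination hsum
  simp only [zpow_mul, zpow_natCast, ← hζdef]
  calc (n : ℂ)⁻¹ * ∑ m ∈ range n, (circulantEigenvalue n m : ℂ) * ζ ^ m
      = 2 / n ^ 5 * ∑ m ∈ range n, (m : ℂ) ^ 2 * (n - m) ^ 2 * ζ ^ m := by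
        simp only [circulantEigenvalue, mul_sum]
        push_cast
        refine sum_congr rfl fun m _ => ?_
        field_simp
    _ = (n : ℂ)⁻¹ ^ 4 * (-3 / Complex.sin (π * d / n) ^ 4 + 2 / Complex.sin (π * d / n) ^ 2) := by
        rw [hS, neg_three_div_sin_pow_four_add_two_div_sin_sq hζ hζ1]
        field_simp
        ring
    _ = _ := by
        push_cast
        field_simp

end

open Real Matrix

theorem circulant_eigenvector_general (n : ℕ)
    (A : Matrix (Fin n) (Fin n) ℝ)
    (hA : ∀ i j : Fin n, i ≠ j →
      A i j = -3 / ((n : ℝ) ^ 4 * Real.sin (π * (((i : ℕ) : ℝ) - ((j : ℕ) : ℝ)) / n) ^ 4)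
        + 2 / ((n : ℝ) ^ 4 * Real.sin (π * (((i : ℕ) : ℝ) - ((j : ℕ) : ℝ)) / n) ^ 2))
    (hAd : ∀ i : Fin n, A i i
      = ((n : ℝ) ^ 2 - 1) * ((n : ℝ) ^ 2 + 11) / (15 * (n : ℝ) ^ 4)
        - (2 * (n : ℝ) ^ 2 - 2) / (3 * (n : ℝ) ^ 4))
    (k : Fin n) :
    (A.map (fun a => (a : ℂ))).mulVec
        (fun j : Fin n => Complex.exp (2 * (π : ℂ) * Complex.I * ((j : ℕ) : ℂ) * ((k : ℕ) : ℂ) / (n : ℂ)))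
      = ((2 * ((k : ℕ) : ℝ) ^ 2 * ((n : ℝ) - ((k : ℕ) : ℝ)) ^ 2 / (n : ℝ) ^ 4 : ℝ) : ℂ) •
        (fun j : Fin n => Complex.exp (2 * (π : ℂ) * Complex.I * ((j : ℕ) : ℂ) * ((k : ℕ) : ℂ) / (n : ℂ))) := by
  have hn : n ≠ 0 := k.pos.ne'
  have hv : (fun j : Fin n => Complex.exp (2 * π * Complex.I * (j : ℕ) * (k : ℕ) / n))
      = fun j : Fin n => Complex.exp (2 * π * Complex.I / n) ^ ((j : ℤ) * k) :=
    funext fun j => by rw [← Complex.exp_int_mul]; push_cast; ring_nf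
  rw [hv]
  refine mulVec_zpow_eq_smul_of_eq_inv_dft (Complex.isPrimitiveRoot_exp n hn)
    (fun m => (circulantEigenvalue n m : ℂ)) _ (fun i j => ?_) k
  rw [map_apply]
  rcases eq_or_ne i j with rfl | hij
  · simp [hAd, ← inv_mul_sum_circulantEigenvalue hn]
  · have hd : ¬(n : ℤ) ∣ (i : ℤ) - j :=
      fun h => hij (Fin.ext ((Int.natCast_dvd_sub_iff_eq_of_lt i.isLt j.isLt).mp h))
    rw [hA i j hij, inv_mul_sum_circulantEigenvalue_mul_zpow hn hd]
    push_cast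
    rfl

theorem circulant_eigenvector (n : ℕ) (hn : 2 ≤ n)
    (A : Matrix (Fin n) (Fin n) ℝ)
    (hA : ∀ i j : Fin n, i ≠ j →
      A i j = -3 / ((n : ℝ) ^ 4 * Real.sin (π * (((i : ℕ) : ℝ) - ((j : ℕ) : ℝ)) / n) ^ 4)
        + 2 / ((n : ℝ) ^ 4 * Real.sin (π * (((i : ℕ) : ℝ) - ((j : ℕ) : ℝ)) / n) ^ 2))
    (hAd : ∀ i : Fin n, A i i
      = ((n : ℝ) ^ 2 - 1) * ((n : ℝ) ^ 2 + 11) / (15 * (n : ℝ) ^ 4)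
        - (2 * (n : ℝ) ^ 2 - 2) / (3 * (n : ℝ) ^ 4))
    (k : Fin n) :
    (A.map (fun a => (a : ℂ))).mulVec
        (fun j : Fin n => Complex.exp (2 * (π : ℂ) * Complex.I * ((j : ℕ) : ℂ) * ((k : ℕ) : ℂ) / (n : ℂ)))
      = ((2 * ((k : ℕ) : ℝ) ^ 2 * ((n : ℝ) - ((k : ℕ) : ℝ)) ^ 2 / (n : ℝ) ^ 4 : ℝ) : ℂ) •
        (fun j : Fin n => Complex.exp (2 * (π : ℂ) * Complex.I * ((j : ℕ) : ℂ) * ((k : ℕ) : ℂ) / (n : ℂ))) :=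
  circulant_eigenvector_general n A hA hAd k
end

section
/- Define H_n(θ) = −∑_{i≠j} 1/sin²((θ_i−θ_j)/2) for θ = (θ_0,…,θ_{n−1}) with distinct angles mod 2π. At the equally-spaced configuration α_i = 2πi/n + ψ (for a fixed constant ψ), one has H_n(α) = −(n³−n)/3. -/
open Real Finset ComplexConjugate

/-!
Let `ζ = exp (2πi/n)` and `S k = ∑_{a<n} a ζ^{ka}`. For `0 < k < n`, differentiating the
geometric series gives `(ζ^k - 1) S k = n`, and `|ζ^k - 1| = 2 |sin (πk/n)|`, so
`1 / sin² (πk/n) = 4 |S k|² / n²`. Parseval's identity `∑_{k<n} |S k|² = n ∑_{a<n} a²` together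
with `S 0 = ∑_{a<n} a` then yields `∑_{k=1}^{n-1} 1 / sin² (πk/n) = (n² - 1) / 3`. Each term of
the energy depends only on `i - j` modulo `n`, so the energy is `-n` times this sum.
-/

theorem sub_one_mul_sum_range_mul_pow {R : Type*} [CommRing R] (z : R) (n : ℕ) :
    (z - 1) * ∑ i ∈ range n, (i : R) * z ^ i = n * z ^ n - ∑ i ∈ range n, z ^ (i + 1) := by
  induction n with
  | zero => simp
  | succ n ih =>
    rw [sum_range_succ, sum_range_succ, mul_add, ih]
    push_cast
    ring

theorem sub_one_mul_sum_range_mul_pow_of_pow_eq_one {K : Type*} [Field K] {z : K} {n : ℕ}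
    (hz : z ≠ 1) (hzn : z ^ n = 1) : (z - 1) * ∑ i ∈ range n, (i : K) * z ^ i = n := by
  have hgeom : ∑ i ∈ range n, z ^ i = 0 := by rw [geom_sum_eq hz, hzn, sub_self, zero_div]
  simp_rw [sub_one_mul_sum_range_mul_pow, hzn, pow_succ, ← sum_mul, hgeom]
  simp

theorem IsPrimitiveRoot.sum_range_pow_mul_conj_pow_pow {ζ : ℂ} {n a b : ℕ}
    (hζ : IsPrimitiveRoot ζ n) (ha : a < n) (hb : b < n) :
    ∑ k ∈ range n, (ζ ^ a * conj (ζ ^ b)) ^ k = if a = b then (n : ℂ) else 0 := by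
  have hζ1 : ‖ζ‖ = 1 := hζ.norm'_eq_one (by omega)
  rw [← Complex.inv_eq_conj (by rw [norm_pow, hζ1, one_pow])]
  split_ifs with hab
  · subst hab
    simp [mul_inv_cancel₀ (pow_ne_zero a (hζ.ne_zero (by omega)))]
  · have hw : ζ ^ a * (ζ ^ b)⁻¹ ≠ 1 := fun h ↦
      hab (hζ.pow_inj ha hb (mul_inv_eq_one₀ (pow_ne_zero b (hζ.ne_zero (by omega))) |>.1 h))
    rw [geom_sum_eq hw, mul_pow, inv_pow, ← pow_mul, ← pow_mul, pow_mul', pow_mul' ζ b,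
      hζ.pow_eq_one, one_pow, one_pow, inv_one, mul_one, sub_self, zero_div]

theorem IsPrimitiveRoot.sum_range_norm_sum_mul_pow_sq {ζ : ℂ} {n : ℕ} (hζ : IsPrimitiveRoot ζ n)
    (c : ℕ → ℂ) :
    ∑ k ∈ range n, ‖∑ a ∈ range n, c a * (ζ ^ k) ^ a‖ ^ 2 = n * ∑ a ∈ range n, ‖c a‖ ^ 2 := by
  apply Complex.ofReal_injective
  have hterm : ∀ k, ((‖∑ a ∈ range n, c a * (ζ ^ k) ^ a‖ ^ 2 : ℝ) : ℂ)
      = ∑ a ∈ range n, ∑ b ∈ range n, c a * conj (c b) * (ζ ^ a * conj (ζ ^ b)) ^ k := by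
    intro k
    rw [Complex.ofReal_pow, ← Complex.mul_conj', map_sum, sum_mul_sum]
    refine sum_congr rfl fun a _ ↦ sum_congr rfl fun b _ ↦ ?_
    rw [map_mul, map_pow, map_pow, ← pow_mul, ← pow_mul, mul_comm k a, mul_comm k b, pow_mul,
      pow_mul, ← map_pow]
    ring
  calc ((∑ k ∈ range n, ‖∑ a ∈ range n, c a * (ζ ^ k) ^ a‖ ^ 2 : ℝ) : ℂ)
      = ∑ a ∈ range n, ∑ b ∈ range n,
          c a * conj (c b) * ∑ k ∈ range n, (ζ ^ a * conj (ζ ^ b)) ^ k := by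
        simp_rw [Complex.ofReal_sum, hterm, mul_sum]
        rw [sum_comm]
        exact sum_congr rfl fun a _ ↦ sum_comm
    _ = ∑ a ∈ range n, c a * conj (c a) * n := by
        refine sum_congr rfl fun a ha ↦ ?_
        rw [sum_congr rfl fun b hb ↦ by
          rw [hζ.sum_range_pow_mul_conj_pow_pow (mem_range.1 ha) (mem_range.1 hb)]]
        simp_rw [mul_ite, mul_zero]
        rw [sum_ite_eq, if_pos ha]
    _ = _ := by
        simp_rw [Complex.mul_conj']
        push_cast
        rw [mul_sum]
        exact sum_congr rfl fun a _ ↦ mul_comm _ _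

theorem sum_range_natCast (n : ℕ) : ∑ a ∈ range n, (a : ℝ) = n * (n - 1) / 2 := by
  induction n with
  | zero => simp
  | succ n ih => rw [sum_range_succ, ih]; push_cast; ring

theorem sum_range_natCast_sq (n : ℕ) :
    ∑ a ∈ range n, (a : ℝ) ^ 2 = n * (n - 1) * (2 * n - 1) / 6 := by
  induction n with
  | zero => simp
  | succ n ih => rw [sum_range_succ, ih]; push_cast; ring

theorem sum_Ico_one_div_sin_sq_pi_mul_div {n : ℕ} (hn : 0 < n) :
    ∑ k ∈ Ico 1 n, 1 / Real.sin (π * k / n) ^ 2 = ((n : ℝ) ^ 2 - 1) / 3 := by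
  set ζ := Complex.exp (2 * π * Complex.I / n)
  have hζ : IsPrimitiveRoot ζ n := Complex.isPrimitiveRoot_exp n hn.ne'
  set S : ℕ → ℂ := fun k ↦ ∑ a ∈ range n, (a : ℂ) * (ζ ^ k) ^ a
  have hterm : ∀ k ∈ Ico 1 n, 1 / Real.sin (π * k / n) ^ 2 = 4 / n ^ 2 * ‖S k‖ ^ 2 := by
    intro k hk
    obtain ⟨hk1, hkn⟩ := mem_Ico.1 hk
    have hSk : (ζ ^ k - 1) * S k = n :=
      sub_one_mul_sum_range_mul_pow_of_pow_eq_one (hζ.pow_ne_one_of_pos_of_lt (by omega) hkn)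
        (by rw [← pow_mul, mul_comm, pow_mul, hζ.pow_eq_one, one_pow])
    have hζk : ‖ζ ^ k - 1‖ = 2 * |Real.sin (π * k / n)| := by
      rw [← Complex.exp_nat_mul, show (k : ℂ) * (2 * π * Complex.I / n)
          = Complex.I * ((2 * (π * k / n) : ℝ) : ℂ) by push_cast; ring,
        Complex.norm_exp_I_mul_ofReal_sub_one, mul_div_cancel_left₀ _ two_ne_zero, norm_mul,
        Real.norm_eq_abs, Real.norm_eq_abs, abs_two]
    have hprod : 4 * Real.sin (π * k / n) ^ 2 * ‖S k‖ ^ 2 = n ^ 2 := by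
      rw [show 4 * Real.sin (π * k / n) ^ 2 = ‖ζ ^ k - 1‖ ^ 2 by
          rw [hζk, mul_pow, sq_abs]; norm_num,
        ← mul_pow, ← norm_mul, hSk, Complex.norm_natCast]
    have hsin : Real.sin (π * k / n) ≠ 0 := by
      rintro h
      rw [h] at hprod
      exact hn.ne' (by simpa using hprod.symm)
    field_simp
    linear_combination -hprod
  have hparseval := hζ.sum_range_norm_sum_mul_pow_sq (fun a ↦ (a : ℂ))
  rw [sum_range_eq_add_Ico _ hn] at hparseval
  simp only [Complex.norm_natCast] at hparseval
  have hsumS : ∑ k ∈ Ico 1 n, ‖S k‖ ^ 2 = n * ∑ a ∈ range n, (a : ℝ) ^ 2 - ‖S 0‖ ^ 2 :=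
    eq_sub_of_add_eq' hparseval
  have hS0 : ‖S 0‖ = ∑ a ∈ range n, (a : ℝ) := by
    simp only [S, pow_zero, one_pow, mul_one]
    rw [← Nat.cast_sum, Complex.norm_natCast, Nat.cast_sum]
  rw [sum_congr rfl hterm, ← mul_sum, hsumS, hS0, sum_range_natCast, sum_range_natCast_sq]
  field_simp
  ring

theorem Finset.sum_univ_erase_sub_left {G M : Type*} [AddCommGroup G] [Fintype G] [DecidableEq G]
    [AddCommMonoid M] (g : G → M) (i : G) :
    ∑ j ∈ univ.erase i, g (i - j) = ∑ k ∈ univ.erase 0, g k :=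
  sum_nbij' (i - ·) (i - ·) (by simp [sub_eq_zero, eq_comm]) (by simp [sub_eq_self])
    (by simp) (by simp) (by simp)

theorem Fin.sum_univ_erase_zero_val {n : ℕ} [NeZero n] {M : Type*} [AddCommGroup M]
    (f : ℕ → M) :
    ∑ k ∈ univ.erase (0 : Fin n), f k = ∑ k ∈ Ico 1 n, f k := by
  rw [sum_erase_eq_sub (mem_univ _), Fin.sum_univ_eq_sum_range f,
    sum_range_eq_add_Ico f (NeZero.pos n), Fin.val_zero, add_sub_cancel_left]

theorem Fin.sin_sq_pi_mul_val_sub_div {n : ℕ} (i j : Fin n) :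
    Real.sin (π * ((i - j : Fin n) : ℕ) / n) ^ 2 = Real.sin (π * ((i : ℝ) - j) / n) ^ 2 := by
  rcases le_or_gt j i with hji | hij
  · rw [Fin.coe_sub_iff_le.2 hji, Nat.cast_sub hji]
  · have hn : (n : ℝ) ≠ 0 := Nat.cast_ne_zero.2 (by omega)
    rw [Fin.coe_sub_iff_lt.2 hij, Nat.cast_sub (by omega), Nat.cast_add,
      show π * ((n : ℝ) + i - j) / n = π * ((i : ℝ) - j) / n + π by field_simp; ring,
      Real.sin_add_pi, neg_sq]

theorem ground_state_energy (n : ℕ) (hn : 2 ≤ n) (ψ : ℝ) :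
    -∑ i : Fin n, ∑ j ∈ Finset.univ.erase i,
        (1 : ℝ) / Real.sin (((2 * π * ((i : ℕ) : ℝ) / n + ψ) - (2 * π * ((j : ℕ) : ℝ) / n + ψ)) / 2) ^ 2
      = -((n : ℝ) ^ 3 - n) / 3 := by
  have : NeZero n := ⟨by omega⟩
  have hangle : ∀ i j : Fin n,
      ((2 * π * ((i : ℕ) : ℝ) / n + ψ) - (2 * π * ((j : ℕ) : ℝ) / n + ψ)) / 2
        = π * ((i : ℝ) - j) / n := fun i j ↦ by ring
  simp_rw [hangle, ← Fin.sin_sq_pi_mul_val_sub_div]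
  simp_rw [Finset.sum_univ_erase_sub_left (fun k : Fin n ↦ 1 / Real.sin (π * (k : ℕ) / n) ^ 2)]
  rw [sum_const, card_univ, Fintype.card_fin,
    Fin.sum_univ_erase_zero_val (fun k ↦ 1 / Real.sin (π * k / n) ^ 2),
    sum_Ico_one_div_sin_sq_pi_mul_div (by omega), nsmul_eq_mul]
  ring
end

section
/- Let n ≥ 2, x ∈ ℝⁿ, α_i = 2πi/n + ψ, and H(θ) = −∑_{i≠j} 1/sin²((θ_i−θ_j)/2). Assume all angles α_i + τ(x_i)/n² remain distinct mod 2π for all τ ∈ [0,1]. Then H(α) − H(α + x/n²) = ∑_{i≠j} ((x_i−x_j)²/n⁴) ∫₀¹ (1−τ)·[½ + cos²(π(i−j)/n + τ(x_i−x_j)/(2n²))] / sin⁴(π(i−j)/n + τ(x_i−x_j)/(2n²)) dτ, and in particular H(α) ≥ H(α + x/n²), so the equally spaced configuration maximizes H. -/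
/-!
Along the segment `τ ↦ α + τ x / n²`, each summand `1 / sin (c + τ b)²` of `-H`, with
`c = π (i - j) / n` and `b = (x i - x j) / (2 n²)`, is expanded by Taylor's formula of order two
with integral remainder; its second derivative `4 b² (1/2 + cos²) / sin⁴` is nonnegative.
The first-order terms add up to a multiple of `∑ i, ∑ j, (x i - x j) g (i - j)` with
`g t = cos (π t / n) / sin (π t / n)³`. Since `g` is odd and `n`-periodic, reindexing `j ↦ i - j`
in `Fin n` gives `∑ j, g (i - j) = 0`, so the first variation of `H` vanishes at the equally
spaced configuration.
-/

open Real Set Function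

theorem sub_eq_deriv_mul_add_integral_of_hasDerivAt {f f' f'' : ℝ → ℝ} {a b : ℝ}
    (hf : ∀ t ∈ uIcc a b, HasDerivAt f (f' t) t)
    (hf' : ∀ t ∈ uIcc a b, HasDerivAt f' (f'' t) t) (hf'' : ContinuousOn f'' (uIcc a b)) :
    f b - f a = f' a * (b - a) + ∫ t in a..b, (b - t) * f'' t := by
  have hF : ∀ t ∈ uIcc a b,
      HasDerivAt (fun s => f s + (b - s) * f' s) ((b - t) * f'' t) t := fun t ht =>
    ((hf t ht).add (((hasDerivAt_id t).const_sub b).mul (hf' t ht))).congr_deriv (by simp)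
  rw [intervalIntegral.integral_eq_sub_of_hasDerivAt hF
    ((continuousOn_const.sub continuousOn_id).mul hf'').intervalIntegrable]
  ring

theorem hasDerivAt_one_div_sin_sq {t : ℝ} (h : sin t ≠ 0) :
    HasDerivAt (fun s => 1 / sin s ^ 2) (-2 * (cos t / sin t ^ 3)) t := by
  simp only [one_div]
  refine (((hasDerivAt_sin t).pow 2).inv (pow_ne_zero 2 h)).congr_deriv ?_
  simp only [Pi.pow_apply]
  field_simp
  ring

theorem hasDerivAt_cos_div_sin_pow_three {t : ℝ} (h : sin t ≠ 0) :
    HasDerivAt (fun s => cos s / sin s ^ 3) (-2 * ((1 / 2 + cos t ^ 2) / sin t ^ 4)) t := by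
  refine ((hasDerivAt_cos t).div ((hasDerivAt_sin t).pow 3) (pow_ne_zero 3 h)).congr_deriv ?_
  simp only [Pi.pow_apply]
  field_simp
  linear_combination (-sin t ^ 2) * sin_sq_add_cos_sq t

theorem one_div_sin_sq_add_sub (c b : ℝ) (h : ∀ τ ∈ Icc (0 : ℝ) 1, sin (c + τ * b) ≠ 0) :
    1 / sin (c + b) ^ 2 - 1 / sin c ^ 2
      = -2 * b * (cos c / sin c ^ 3)
        + 4 * b ^ 2 * ∫ τ in (0 : ℝ)..1,
            (1 - τ) * (1 / 2 + cos (c + τ * b) ^ 2) / sin (c + τ * b) ^ 4 := by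
  rw [← uIcc_of_le zero_le_one] at h
  have hline (τ : ℝ) : HasDerivAt (fun s => c + s * b) b τ := by
    simpa using ((hasDerivAt_id τ).mul_const b).const_add c
  have htaylor := sub_eq_deriv_mul_add_integral_of_hasDerivAt
    (f := fun τ => 1 / sin (c + τ * b) ^ 2)
    (f' := fun τ => -2 * (cos (c + τ * b) / sin (c + τ * b) ^ 3) * b)
    (f'' := fun τ => -2 * (-2 * ((1 / 2 + cos (c + τ * b) ^ 2) / sin (c + τ * b) ^ 4) * b) * b)
    (fun τ hτ => (hasDerivAt_one_div_sin_sq (h τ hτ)).comp τ (hline τ))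
    (fun τ hτ => (((hasDerivAt_cos_div_sin_pow_three (h τ hτ)).comp τ (hline τ)).const_mul
      (-2)).mul_const b)
    (by
      have h4 : ∀ τ ∈ uIcc (0 : ℝ) 1, sin (c + τ * b) ^ 4 ≠ 0 := fun τ hτ =>
        pow_ne_zero 4 (h τ hτ)
      fun_prop (disch := exact h4))
  simp only [zero_mul, add_zero, one_mul, sub_zero] at htaylor
  rw [htaylor, ← intervalIntegral.integral_const_mul]
  congr 1
  · ring
  · congr 1 with τ
    ring

theorem odd_cos_div_sin_pow_three_pi_mul_div (L : ℝ) :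
    (fun t => cos (π * t / L) / sin (π * t / L) ^ 3).Odd := by
  intro t
  simp only [mul_neg, neg_div, cos_neg, sin_neg, Odd.neg_pow (by decide : Odd 3), div_neg]

theorem periodic_cos_div_sin_pow_three_pi_mul_div {L : ℝ} (hL : L ≠ 0) :
    Periodic (fun t => cos (π * t / L) / sin (π * t / L) ^ 3) L := by
  intro t
  have : π * (t + L) / L = π * t / L + π := by field_simp
  simp only [this, cos_add_pi, sin_add_pi, Odd.neg_pow (by decide : Odd 3), neg_div_neg_eq]

theorem Function.Periodic.apply_fin_sub {n : ℕ} {g : ℝ → ℝ} (hg : Periodic g n) (a b : Fin n) :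
    g ((a - b : Fin n) : ℕ) = g ((a : ℕ) - (b : ℕ)) := by
  rcases le_or_gt b a with hba | hab
  · rw [Fin.coe_sub_iff_le.2 hba, Nat.cast_sub hba]
  · rw [Fin.coe_sub_iff_lt.2 hab, Nat.cast_sub (by omega), Nat.cast_add, add_sub_assoc,
      add_comm, hg]

theorem Function.Odd.sum_fin_sub_eq_zero {n : ℕ} [NeZero n] {g : ℝ → ℝ} (hodd : g.Odd)
    (hper : Periodic g n) (i : Fin n) : ∑ j : Fin n, g ((i : ℕ) - (j : ℕ)) = 0 := by
  have hshift : ∑ j : Fin n, g ((i : ℕ) - (j : ℕ)) = ∑ k : Fin n, g (k : ℕ) :=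
    Fintype.sum_equiv (Equiv.subLeft i) _ _ fun j => (hper.apply_fin_sub i j).symm
  rw [hshift]
  exact Odd.sum_eq_zero fun k => by
    rw [← zero_sub k, hper.apply_fin_sub, Fin.val_zero, Nat.cast_zero, zero_sub, hodd]

theorem Function.Odd.sum_sum_erase_sub_mul_eq_zero {n : ℕ} [NeZero n] {g : ℝ → ℝ} (hodd : g.Odd)
    (hper : Periodic g n) (y : Fin n → ℝ) :
    ∑ i : Fin n, ∑ j ∈ Finset.univ.erase i, (y i - y j) * g ((i : ℕ) - (j : ℕ)) = 0 := by
  have hrev (j : Fin n) : ∑ i : Fin n, g ((i : ℕ) - (j : ℕ)) = 0 := by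
    simp only [← neg_sub ((j : ℕ) : ℝ), hodd _, Finset.sum_neg_distrib,
      hodd.sum_fin_sub_eq_zero hper j, neg_zero]
  have herase (i : Fin n) : ∑ j ∈ Finset.univ.erase i, (y i - y j) * g ((i : ℕ) - (j : ℕ))
      = ∑ j : Fin n, (y i - y j) * g ((i : ℕ) - (j : ℕ)) :=
    Finset.sum_erase _ (by simp)
  rw [Finset.sum_congr rfl fun i _ => herase i]
  simp only [sub_mul, Finset.sum_sub_distrib]
  rw [Finset.sum_comm (f := fun (i j : Fin n) => y j * g ((i : ℕ) - (j : ℕ)))]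
  simp only [← Finset.mul_sum, hodd.sum_fin_sub_eq_zero hper, hrev, mul_zero,
    Finset.sum_const_zero, sub_zero]

theorem taylor_deficit_formula (n : ℕ) (hn : 2 ≤ n) (ψ : ℝ) (x : Fin n → ℝ)
    (H : (Fin n → ℝ) → ℝ)
    (hH : ∀ θ : Fin n → ℝ,
      H θ = -∑ i : Fin n, ∑ j ∈ Finset.univ.erase i, 1 / Real.sin ((θ i - θ j) / 2) ^ 2)
    (α : Fin n → ℝ) (hα : ∀ i : Fin n, α i = 2 * π * ((i : ℕ) : ℝ) / n + ψ)
    (hdist : ∀ τ ∈ Set.Icc (0 : ℝ) 1, ∀ i j : Fin n, i ≠ j →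
      Real.sin (((α i + τ * x i / (n : ℝ) ^ 2) - (α j + τ * x j / (n : ℝ) ^ 2)) / 2) ≠ 0) :
    H α - H (fun i => α i + x i / (n : ℝ) ^ 2)
      = ∑ i : Fin n, ∑ j ∈ Finset.univ.erase i,
          ((x i - x j) ^ 2 / (n : ℝ) ^ 4) *
            ∫ τ in (0 : ℝ)..1, (1 - τ) *
              (1 / 2 + Real.cos (π * (((i : ℕ) : ℝ) - ((j : ℕ) : ℝ)) / n
                  + τ * (x i - x j) / (2 * (n : ℝ) ^ 2)) ^ 2)
              / Real.sin (π * (((i : ℕ) : ℝ) - ((j : ℕ) : ℝ)) / n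
                  + τ * (x i - x j) / (2 * (n : ℝ) ^ 2)) ^ 4
    ∧ H (fun i => α i + x i / (n : ℝ) ^ 2) ≤ H α := by
  have : NeZero n := ⟨by omega⟩
  have hangle (τ : ℝ) (i j : Fin n) :
      ((α i + τ * x i / (n : ℝ) ^ 2) - (α j + τ * x j / (n : ℝ) ^ 2)) / 2
        = π * (((i : ℕ) : ℝ) - ((j : ℕ) : ℝ)) / n + τ * ((x i - x j) / (2 * (n : ℝ) ^ 2)) := by
    rw [hα, hα]
    ring
  have hsin (i j : Fin n) (hij : j ∈ Finset.univ.erase i) : ∀ τ ∈ Icc (0 : ℝ) 1,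
      sin (π * (((i : ℕ) : ℝ) - ((j : ℕ) : ℝ)) / n + τ * ((x i - x j) / (2 * (n : ℝ) ^ 2))) ≠ 0 :=
    fun τ hτ => hangle τ i j ▸ hdist τ hτ i j (Finset.ne_of_mem_erase hij).symm
  have hfirst : ∑ i : Fin n, ∑ j ∈ Finset.univ.erase i,
      -2 * ((x i - x j) / (2 * (n : ℝ) ^ 2)) *
        (cos (π * (((i : ℕ) : ℝ) - ((j : ℕ) : ℝ)) / n)
          / sin (π * (((i : ℕ) : ℝ) - ((j : ℕ) : ℝ)) / n) ^ 3) = 0 := by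
    rw [← (odd_cos_div_sin_pow_three_pi_mul_div n).sum_sum_erase_sub_mul_eq_zero
      (periodic_cos_div_sin_pow_three_pi_mul_div (NeZero.ne (n : ℝ))) fun i => -x i / (n : ℝ) ^ 2]
    refine Finset.sum_congr rfl fun i _ => Finset.sum_congr rfl fun j _ => ?_
    ring
  refine (fun hdeficit => ⟨hdeficit, sub_nonneg.1 (hdeficit ▸ ?_)⟩) ?_
  · have h0 (i j : Fin n) : (α i - α j) / 2 = π * (((i : ℕ) : ℝ) - ((j : ℕ) : ℝ)) / n := by
      simpa using hangle 0 i j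
    have h1 (i j : Fin n) := hangle 1 i j
    simp only [one_mul] at h1
    simp only [hH, h0, h1, neg_sub_neg, ← Finset.sum_sub_distrib]
    rw [Finset.sum_congr rfl fun i _ => Finset.sum_congr rfl fun j hij =>
      one_div_sin_sq_add_sub _ _ (hsin i j hij)]
    simp only [Finset.sum_add_distrib, hfirst, zero_add]
    refine Finset.sum_congr rfl fun i _ => Finset.sum_congr rfl fun j _ => ?_
    simp only [mul_div_assoc]
    ring
  · refine Finset.sum_nonneg fun i _ => Finset.sum_nonneg fun j _ => mul_nonneg (by positivity)
      (intervalIntegral.integral_nonneg zero_le_one fun τ hτ => ?_)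
    exact div_nonneg (mul_nonneg (sub_nonneg.2 hτ.2) (by positivity)) (by positivity)
end
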